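/- arXiv:2508.06907 — 6 statements merged into one kernel-verified Lean document; each statement's English description precedes it below -/
import Mathlib

section
/- Let P = p₁…pₙ be a permutation containing no square of length 4. Then there exists i ∈ {0,1,2,3} such that for every integer t and all valid indices, p_{i+4t} < p_{i+4t±1} and p_{i+4t+2} > p_{i+4t+2±1}. -/
/-- Two sequences of distinct integers are order-isomorphic:
same length and corresponding pairs compare the same way. -/
def OrdIso (p q : List ℤ) : Prop :=
  p.length = q.length ∧
  ∀ i j : ℕ, i < p.length → j < p.length →
    (p.getD i 0 < p.getD j 0 ↔ q.getD i 0 < q.getD j 0)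

/-- A square is a sequence X₁X₂ with X₁ order-isomorphic to X₂ and |X₁| ≥ 2. -/
def IsSquareL (x : List ℤ) : Prop :=
  ∃ a b : List ℤ, x = a ++ b ∧ 2 ≤ a.length ∧ OrdIso a b

/-- A sequence contains a square if some contiguous factor is a square. -/
def ContainsSquare (p : List ℤ) : Prop :=
  ∃ f : List ℤ, f <:+: p ∧ IsSquareL f

/-- Square-free: no contiguous factor is a square. -/
def SquareFreeL (p : List ℤ) : Prop := ¬ ContainsSquare p

/-- `Q` is an extension of `P` in position `i`:
`Q` has length `|P|+1` and deleting its (i+1)-th symbol gives a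
sequence order-isomorphic to `P`. -/
def ExtL (Q P : List ℤ) (i : ℕ) : Prop :=
  Q.Nodup ∧ Q.length = P.length + 1 ∧ i ≤ P.length ∧ OrdIso (Q.eraseIdx i) P

/-- Condition (S1): with 1-based positions j, positions ≡ i (mod 4) are local
minima and positions ≡ i+2 (mod 4) are local maxima (for all valid indices). -/
def S1Cond (P : List ℤ) (i : ℕ) : Prop :=
  ∀ j : ℕ, 1 ≤ j → j ≤ P.length →
    (j % 4 = i % 4 →
      (2 ≤ j → P.getD (j-1) 0 < P.getD (j-2) 0) ∧
      (j < P.length → P.getD (j-1) 0 < P.getD j 0)) ∧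
    (j % 4 = (i+2) % 4 →
      (2 ≤ j → P.getD (j-2) 0 < P.getD (j-1) 0) ∧
      (j < P.length → P.getD j 0 < P.getD (j-1) 0))

/-- The high-medium-low construction: (S1), (S2) lower < medium < upper
(1-based positions ≡ i mod 4 are lower, ≡ i+2 mod 4 upper, other positions medium),
(S3) the medium-level symbols form a square-free permutation. -/
def HML (P : List ℤ) (i : ℕ) : Prop :=
  i < 4 ∧ S1Cond P i ∧
  (∀ j k : ℕ, 1 ≤ j → j ≤ P.length → 1 ≤ k → k ≤ P.length →
    (j % 4 = i % 4 → k % 2 ≠ i % 2 → P.getD (j-1) 0 < P.getD (k-1) 0) ∧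
    (j % 2 ≠ i % 2 → k % 4 = (i+2) % 4 → P.getD (j-1) 0 < P.getD (k-1) 0)) ∧
  SquareFreeL (((List.range P.length).filter (fun k => (k+1) % 2 != i % 2)).map
    (fun k => P.getD k 0))

/-!
A factor `abcd` of a permutation is a square exactly when `a < b ↔ c < d`. So if `P` has no
square of length four, whether `P` ascends at a position is negated two positions later: the
pattern of ascents is `u, v, ¬u, ¬v, u, v, …`, determined by the first two comparisons. Of the
four possibilities for `(u, v)`, each is a shift of "ascent, ascent, descent, descent", and
reading this pattern off with the right offset `i` gives the local minima at positions
`≡ i (mod 4)` and local maxima at positions `≡ i + 2 (mod 4)`.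
-/

lemma isSquareL_four {a b c d : ℤ} (hab : a ≠ b) (hcd : c ≠ d) (h : a < b ↔ c < d) :
    IsSquareL [a, b, c, d] := by
  refine ⟨[a, b], [c, d], rfl, le_rfl, rfl, fun i j hi hj => ?_⟩
  simp only [List.length_cons, List.length_nil] at hi hj
  interval_cases i <;> interval_cases j <;>
    simp only [List.getD_cons_zero, List.getD_cons_succ] <;> omega

lemma iff_of_iff_not_add_two {u v : ℕ → Prop} {n : ℕ}
    (hu : ∀ k, k + 2 < n → (u (k + 2) ↔ ¬ u k)) (hv : ∀ k, v (k + 2) ↔ ¬ v k)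
    (h₀ : 0 < n → (u 0 ↔ v 0)) (h₁ : 1 < n → (u 1 ↔ v 1)) :
    ∀ k < n, u k ↔ v k
  | 0, hk => h₀ hk
  | 1, hk => h₁ hk
  | k + 2, hk => by rw [hu k hk, hv k, iff_of_iff_not_add_two hu hv h₀ h₁ k (by omega)]

namespace List

def AscentAt (P : List ℤ) (k : ℕ) : Prop := P.getD k 0 < P.getD (k + 1) 0

variable {P : List ℤ}

lemma getD_ne_getD_of_nodup (hP : P.Nodup) {a b : ℕ} (ha : a < P.length) (hb : b < P.length)
    (hab : a ≠ b) : P.getD a 0 ≠ P.getD b 0 := by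
  rw [getD_eq_getElem _ _ ha, getD_eq_getElem _ _ hb]
  exact fun h => hab (hP.getElem_inj_iff.mp h)

lemma getD_succ_lt_of_not_ascentAt (hP : P.Nodup) {k : ℕ} (hk : k + 1 < P.length)
    (h : ¬ P.AscentAt k) : P.getD (k + 1) 0 < P.getD k 0 :=
  (not_lt.mp h).lt_of_ne (getD_ne_getD_of_nodup hP hk (by omega) (by omega))

lemma take_four_drop_eq {k : ℕ} (hk : k + 3 < P.length) :
    (P.drop k).take 4 = [P.getD k 0, P.getD (k + 1) 0, P.getD (k + 2) 0, P.getD (k + 3) 0] := by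
  apply ext_getElem (by simp; omega)
  intro m hm _
  simp only [length_take, length_drop] at hm
  have hm4 : m < 4 := by omega
  rw [getElem_take, getElem_drop]
  interval_cases m <;> simp only [getElem_cons_succ, getElem_cons_zero, add_zero] <;>
    exact (getD_eq_getElem _ _ (by omega)).symm

/-- Otherwise `P[k..k+3]` would be a square. -/
lemma ascentAt_add_two_iff (hP : P.Nodup)
    (h4 : ∀ f : List ℤ, f <:+: P → f.length = 4 → ¬ IsSquareL f) {k : ℕ}
    (hk : k + 3 < P.length) : P.AscentAt (k + 2) ↔ ¬ P.AscentAt k := by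
  have hinfix : (P.drop k).take 4 <:+: P :=
    (take_prefix 4 (P.drop k)).isInfix.trans (drop_suffix k P).isInfix
  have hsq := h4 _ hinfix (by simp; omega)
  rw [take_four_drop_eq hk] at hsq
  have hnot := mt (isSquareL_four (getD_ne_getD_of_nodup hP (by omega) (by omega) (by omega))
    (getD_ne_getD_of_nodup hP (by omega) (by omega) (by omega))) hsq
  unfold AscentAt
  tauto

/-- With 1-based positions, `i` is a local minimum and `i + 2` a local maximum exactly when
`P` ascends at the 0-based positions `i - 1` and `i` and descends at `i + 1` and `i + 2`. -/
lemma s1Cond_of_ascentAt_iff (hP : P.Nodup) {i : ℕ}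
    (h : ∀ k, k + 1 < P.length → (P.AscentAt k ↔ k % 4 = i % 4 ∨ (k + 1) % 4 = i % 4)) :
    S1Cond P i := by
  intro j hj₁ hj₂
  refine ⟨fun hj => ⟨fun hj' => ?_, fun hj' => ?_⟩, fun hj => ⟨fun hj' => ?_, fun hj' => ?_⟩⟩
  · obtain ⟨k, rfl⟩ : ∃ k, j = k + 2 := ⟨j - 2, by omega⟩
    exact getD_succ_lt_of_not_ascentAt hP (by omega) ((h k (by omega)).not.mpr (by omega))
  · obtain ⟨k, rfl⟩ : ∃ k, j = k + 1 := ⟨j - 1, by omega⟩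
    exact (h k (by omega)).mpr (by omega)
  · obtain ⟨k, rfl⟩ : ∃ k, j = k + 2 := ⟨j - 2, by omega⟩
    exact (h k (by omega)).mpr (by omega)
  · obtain ⟨k, rfl⟩ : ∃ k, j = k + 1 := ⟨j - 1, by omega⟩
    exact getD_succ_lt_of_not_ascentAt hP hj' ((h k hj').not.mpr (by omega))

end List

lemma exists_lt_four_iff_and_iff (a b : Prop) :
    ∃ i < 4, (a ↔ 0 = i ∨ 1 = i) ∧ (b ↔ 1 = i ∨ 2 = i) := by
  by_cases a <;> by_cases b
  exacts [⟨1, by simp_all⟩, ⟨0, by simp_all⟩, ⟨2, by simp_all⟩, ⟨3, by simp_all⟩]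

theorem stmt1 (P : List ℤ) (hnd : P.Nodup)
    (h4 : ∀ f : List ℤ, f <:+: P → f.length = 4 → ¬ IsSquareL f) :
    ∃ i : ℕ, i < 4 ∧ S1Cond P i := by
  obtain ⟨i, hi, h₀, h₁⟩ := exists_lt_four_iff_and_iff (P.AscentAt 0) (P.AscentAt 1)
  refine ⟨i, hi, List.s1Cond_of_ascentAt_iff hnd fun k hk => ?_⟩
  refine iff_of_iff_not_add_two (n := P.length - 1)
    (v := fun m => m % 4 = i % 4 ∨ (m + 1) % 4 = i % 4)
    (fun m hm => List.ascentAt_add_two_iff hnd h4 (by omega))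
    (fun m => by constructor <;> omega)
    (fun _ => by rw [h₀]; constructor <;> omega)
    (fun _ => by rw [h₁]; constructor <;> omega) k (by omega)
end

section
/- Any permutation constructed by the high-medium-low construction is square-free. That is, if P = p₁…pₙ satisfies: (S1) there is i ∈ {0,1,2,3} such that p_{i+4t} < p_{i+4t±1} and p_{i+4t+2} > p_{i+4t+2±1} for all valid indices (defining lower-level symbols at indices 4t+i, medium-level symbols at indices 4t+i±1, and upper-level symbols at indices 4t+i+2); (S2) every lower-level symbol is less than every medium-level symbol, and every medium-level symbol is less than every upper-level symbol; (S3) the subsequence of medium-level symbols forms a square-free permutation; then P is square-free. -/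
/-!
The ascents and descents of a high-medium-low permutation follow the pattern of period four
(up, up, down, down). Halves of a square are order-isomorphic, so they share their pattern of
ascents, which forces the half-length `m` to be a multiple of four (`m = 2` already fails).
Since the medium-level symbols occupy every other position and `m` is even, those lying in the
two halves of the square form two order-isomorphic runs of length `m / 2 ≥ 2` in the medium
subsequence, a square there, against (S3).
-/

/-- `p` has a square factor starting at the 0-based index `k`, with halves of length `m`. -/
def HasSquareAt (p : List ℤ) (k m : ℕ) : Prop :=
  2 ≤ m ∧ k + 2 * m ≤ p.length ∧
    ∀ u v, u < m → v < m →
      (p.getD (k + u) 0 < p.getD (k + v) 0 ↔ p.getD (k + m + u) 0 < p.getD (k + m + v) 0)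

lemma List.getD_take_drop {p : List ℤ} {k m u : ℕ} (hu : u < m) :
    ((p.drop k).take m).getD u 0 = p.getD (k + u) 0 := by
  simp [List.getD_eq_getElem?_getD, hu]

theorem containsSquare_iff_exists_hasSquareAt {p : List ℤ} :
    ContainsSquare p ↔ ∃ k m, HasSquareAt p k m := by
  constructor
  · rintro ⟨_, ⟨s, t, rfl⟩, a, b, rfl, ha, hlen, hiso⟩
    have hA : ∀ u < a.length, (s ++ (a ++ b) ++ t).getD (s.length + u) 0 = a.getD u 0 := by
      intro u hu
      rw [List.append_assoc, List.getD_append_right _ _ _ _ (by omega), List.getD_append _ _ _ _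
        (by simp; omega), List.getD_append _ _ _ _ (by omega)]
      simp
    have hB : ∀ u < a.length,
        (s ++ (a ++ b) ++ t).getD (s.length + a.length + u) 0 = b.getD u 0 := by
      intro u hu
      rw [List.append_assoc, List.getD_append_right _ _ _ _ (by omega), List.getD_append _ _ _ _
        (by simp; omega), List.getD_append_right _ _ _ _ (by omega)]
      congr 1
      omega
    refine ⟨s.length, a.length, ha, by simp; omega, fun u v hu hv => ?_⟩
    rw [hA u hu, hA v hv, hB u hu, hB v hv]
    exact hiso u v hu hv
  · rintro ⟨k, m, hm, hlen, hiso⟩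
    refine ⟨(p.drop k).take (m + m), ?_, (p.drop k).take m, ((p.drop (k + m)).take m),
      ?_, by simp; omega, by simp; omega, fun u v hu hv => ?_⟩
    · exact ((p.drop k).take_prefix _).isInfix.trans (p.drop_suffix k).isInfix
    · rw [List.take_add, List.drop_drop]
    · simp only [List.length_take, List.length_drop] at hu hv
      rw [List.getD_take_drop (by omega), List.getD_take_drop (by omega),
        List.getD_take_drop (by omega), List.getD_take_drop (by omega)]
      exact hiso u v (by omega) (by omega)

theorem HasSquareAt.getD_lt_getD_succ_iff {p : List ℤ} {k m : ℕ} (hsq : HasSquareAt p k m)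
    {u : ℕ} (hu : u + 1 < m) :
    p.getD (k + u) 0 < p.getD (k + u + 1) 0 ↔ p.getD (k + m + u) 0 < p.getD (k + m + u + 1) 0 :=
  hsq.2.2 u (u + 1) (by omega) (by omega)

/-- In the 1-based positions of `S1Cond`: an ascent from `k + 1` to `k + 2` happens exactly when
`k + 1` is a lower or `k + 2` an upper position. -/
theorem S1Cond.getD_lt_getD_succ_iff {p : List ℤ} {i : ℕ} (hS1 : S1Cond p i) {k : ℕ}
    (hk : k + 1 < p.length) :
    p.getD k 0 < p.getD (k + 1) 0 ↔ (k + 1) % 4 = i % 4 ∨ (k + 2) % 4 = (i + 2) % 4 := by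
  have h1 := hS1 (k + 1) (by omega) (by omega)
  have h2 := hS1 (k + 2) (by omega) (by omega)
  simp only [Nat.add_sub_cancel, show k + 2 - 1 = k + 1 by omega,
    show k + 2 - 2 = k by omega] at h1 h2
  have hres : (k + 1) % 4 = i % 4 ∨ (k + 2) % 4 = (i + 2) % 4 ∨
      (k + 1) % 4 = (i + 2) % 4 ∨ (k + 2) % 4 = i % 4 := by omega
  rcases hres with hr | hr | hr | hr
  · exact ⟨fun _ => Or.inl hr, fun _ => (h1.1 hr).2 hk⟩
  · exact ⟨fun _ => Or.inr hr, fun _ => (h2.2 hr).1 (by omega)⟩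
  · have hdesc := (h1.2 hr).2 hk
    exact ⟨fun hasc => (lt_asymm hdesc hasc).elim, fun _ => by omega⟩
  · have hdesc := (h2.1 hr).1 (by omega)
    exact ⟨fun hasc => (lt_asymm hdesc hasc).elim, fun _ => by omega⟩

theorem S1Cond.four_dvd_of_hasSquareAt {p : List ℤ} {i k m : ℕ} (hS1 : S1Cond p i)
    (hsq : HasSquareAt p k m) : 4 ∣ m := by
  have hpat : ∀ u, u + 1 < m →
      ((k + u + 1) % 4 = i % 4 ∨ (k + u + 2) % 4 = (i + 2) % 4 ↔
        (k + m + u + 1) % 4 = i % 4 ∨ (k + m + u + 2) % 4 = (i + 2) % 4) := by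
    intro u hu
    rw [← hS1.getD_lt_getD_succ_iff (by have := hsq.2.1; omega),
      ← hS1.getD_lt_getD_succ_iff (by have := hsq.2.1; omega)]
    exact hsq.getD_lt_getD_succ_iff hu
  have hm2 := hsq.1
  have h0 := hpat 0 (by omega)
  rcases Nat.lt_or_ge m 3 with hm | hm
  · omega
  · have h1 := hpat 1 (by omega)
    omega

theorem List.range_filter_succ_mod_two_ne (i n : ℕ) :
    (List.range n).filter (fun k => (k + 1) % 2 != i % 2)
      = (List.range ((n + 1 - i % 2) / 2)).map (fun q => i % 2 + 2 * q) := by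
  induction n with
  | zero => simp
  | succ n ih =>
    rw [List.range_succ, List.filter_append, ih, List.filter_singleton]
    by_cases hn : n % 2 = i % 2
    · have hkeep : ((n + 1) % 2 != i % 2) = true := by simp only [bne_iff_ne, ne_eq]; omega
      rw [hkeep, show (n + 1 + 1 - i % 2) / 2 = (n + 1 - i % 2) / 2 + 1 by omega,
        List.range_succ, List.map_append]
      simp only [List.map_cons, List.map_nil, cond_true]
      congr 2
      omega
    · have hdrop : ((n + 1) % 2 != i % 2) = false := by simp only [bne_eq_false_iff_eq]; omega
      rw [hdrop, show (n + 1 + 1 - i % 2) / 2 = (n + 1 - i % 2) / 2 by omega]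
      simp

theorem HasSquareAt.map_range_getD_two_mul {p : List ℤ} {k m : ℕ} (hsq : HasSquareAt p k m)
    (hm : 4 ∣ m) {c q L : ℕ} (hcq : k ≤ c + 2 * q) (hcq' : c + 2 * q ≤ k + 1)
    (hL : q + m ≤ L) :
    HasSquareAt ((List.range L).map fun j => p.getD (c + 2 * j) 0) q (m / 2) := by
  obtain ⟨hm2, -, hiso⟩ := hsq
  refine ⟨by omega, by simp; omega, fun u v hu hv => ?_⟩
  have hget : ∀ j < L, ((List.range L).map fun j => p.getD (c + 2 * j) 0).getD j 0 =
      p.getD (c + 2 * j) 0 := by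
    intro j hj
    simp [List.getD_eq_getElem?_getD, hj]
  rw [hget _ (by omega), hget _ (by omega), hget _ (by omega), hget _ (by omega)]
  have := hiso (c + 2 * q - k + 2 * u) (c + 2 * q - k + 2 * v) (by omega) (by omega)
  convert this using 3 <;> omega

theorem stmt2_general (P : List ℤ) (h : ∃ i : ℕ, HML P i) :
    SquareFreeL P := by
  obtain ⟨i, -, hS1, -, hS3⟩ := h
  intro hsquare
  obtain ⟨k, m, hsq⟩ := containsSquare_iff_exists_hasSquareAt.mp hsquare
  have hm := hS1.four_dvd_of_hasSquareAt hsq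
  have hlen := hsq.2.1
  apply hS3
  rw [List.range_filter_succ_mod_two_ne, List.map_map]
  exact containsSquare_iff_exists_hasSquareAt.mpr ⟨_, _,
    hsq.map_range_getD_two_mul hm (c := i % 2) (q := (k + 1 - i % 2) / 2) (by omega) (by omega)
      (by omega)⟩

theorem stmt2 (P : List ℤ) (hnd : P.Nodup) (h : ∃ i : ℕ, HML P i) :
    SquareFreeL P :=
  stmt2_general P h
end

section
/- Let m ≥ 1, let A = a₁…aₘ and C = c₁…cₘ be permutations of length m and B = b₁…b_{2m-1} a permutation of length 2m-1, such that every symbol of A is less than every symbol of B, every symbol of B is less than every symbol of C, and B is square-free. Define P = p₁…p_{4m-1} by pᵢ = a_{(i+3)/4} if i ≡ 1 mod 4, pᵢ = c_{(i+1)/4} if i ≡ 3 mod 4, and pᵢ = b_{i/2} if i is even. Then P is square-free. -/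
/-- The interleaving pattern a₁b₁c₁b₂a₂b₃c₂… of length 4m-1 :
with 1-based index i, pᵢ = a_{(i+3)/4} if i ≡ 1 mod 4, pᵢ = c_{(i+1)/4}
if i ≡ 3 mod 4, pᵢ = b_{i/2} if i is even. -/
def interleave (A B C : List ℤ) (m : ℕ) : List ℤ :=
  (List.range (4*m - 1)).map (fun k =>
    if (k+1) % 4 = 1 then A.getD ((k+4)/4 - 1) 0
    else if (k+1) % 4 = 3 then C.getD ((k+2)/4 - 1) 0
    else B.getD ((k+1)/2 - 1) 0)

/-!
The interleaving rises from an `a` to the next `b` and from a `b` to the next `c`, and falls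
otherwise, so its ascent pattern is up, up, down, down, repeated. The two halves of a square
have equal ascent patterns at their first two positions, which forces the half-length to be a
multiple of 4. The entries of `B` then sit at the same offsets in both halves, and restricting
the square to them gives a square in `B`.
-/

/-- `f` has a square of half-length `L` starting at `s`. -/
def IsSquareAt (f : ℕ → ℤ) (s L : ℕ) : Prop :=
  ∀ i j, i < L → j < L → (f (s + i) < f (s + j) ↔ f (s + L + i) < f (s + L + j))

lemma getD_take_drop {α : Type*} (l : List α) (d : α) {s L i : ℕ} (hi : i < L) :
    ((l.drop s).take L).getD i d = l.getD (s + i) d := by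
  simp [List.getD_eq_getElem?_getD, hi]

lemma getD_append_length_add {α : Type*} (l l' : List α) (d : α) (i : ℕ) :
    (l ++ l').getD (l.length + i) d = l'.getD i d := by
  simp [List.getD_eq_getElem?_getD, List.getElem?_append_right]

lemma getD_mem {α : Type*} {l : List α} {d : α} {i : ℕ} (h : i < l.length) :
    l.getD i d ∈ l := by
  rw [List.getD_eq_getElem l d h]
  exact List.getElem_mem h

theorem containsSquare_iff_exists_isSquareAt (p : List ℤ) :
    ContainsSquare p ↔
      ∃ s L, 2 ≤ L ∧ s + 2 * L ≤ p.length ∧ IsSquareAt (p.getD · 0) s L := by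
  constructor
  · rintro ⟨_, ⟨pre, suf, rfl⟩, a, b, rfl, hL, hab_len, hab⟩
    refine ⟨pre.length, a.length, hL, by simp; omega, fun i j hi hj => ?_⟩
    have hA : ∀ k < a.length, (pre ++ (a ++ b) ++ suf).getD (pre.length + k) 0 = a.getD k 0 :=
      fun k hk => by
        rw [List.append_assoc, getD_append_length_add, List.append_assoc,
          List.getD_append _ _ _ _ hk]
    have hB : ∀ k < a.length,
        (pre ++ (a ++ b) ++ suf).getD (pre.length + a.length + k) 0 = b.getD k 0 :=
      fun k hk => by
        rw [List.append_assoc, add_assoc, getD_append_length_add, List.append_assoc,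
          getD_append_length_add, List.getD_append _ _ _ _ (by omega)]
    simpa only [hA i hi, hA j hj, hB i hi, hB j hj] using hab i j hi hj
  · rintro ⟨s, L, hL, hlen, hsq⟩
    refine ⟨(p.drop s).take (2 * L),
      (List.take_prefix _ _).isInfix.trans (List.drop_suffix s p).isInfix,
      (p.drop s).take L, (p.drop (s + L)).take L,
      by rw [two_mul, List.take_add, List.drop_drop], by simp; omega, by simp; omega,
      fun i j hi hj => ?_⟩
    have hi' : i < L := by simp at hi; omega
    have hj' : j < L := by simp at hj; omega
    simpa only [getD_take_drop _ _ hi', getD_take_drop _ _ hj'] using hsq i j hi' hj'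

namespace IsSquareAt

variable {f : ℕ → ℤ} {s L : ℕ}

-- The ascent pattern `k % 4 < 2` has period 4 and no shorter shift preserves two consecutive
-- ascent bits.
theorem four_dvd (hf : ∀ k, k + 1 < s + 2 * L → (f k < f (k + 1) ↔ k % 4 < 2))
    (hL : 2 ≤ L) (h : IsSquareAt f s L) : 4 ∣ L := by
  have ascent_iff : ∀ i, i + 1 < L → ((s + i) % 4 < 2 ↔ (s + L + i) % 4 < 2) := by
    intro i hi
    have hi := h i (i + 1) (by omega) hi
    rwa [← add_assoc, ← add_assoc, hf _ (by omega), hf _ (by omega)] at hi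
  have h0 := ascent_iff 0 (by omega)
  rcases (by omega : L = 2 ∨ 3 ≤ L) with rfl | hL3
  · omega
  · have h1 := ascent_iff 1 (by omega)
    omega

theorem comp_odd {q : ℕ} (h : IsSquareAt f s (4 * q)) :
    IsSquareAt (fun t => f (2 * t + 1)) (s / 2) (2 * q) := by
  intro i j hi hj
  have hij := h (2 * (s / 2 + i) + 1 - s) (2 * (s / 2 + j) + 1 - s) (by omega) (by omega)
  rwa [show s + (2 * (s / 2 + i) + 1 - s) = 2 * (s / 2 + i) + 1 by omega,
    show s + (2 * (s / 2 + j) + 1 - s) = 2 * (s / 2 + j) + 1 by omega,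
    show s + 4 * q + (2 * (s / 2 + i) + 1 - s) = 2 * (s / 2 + 2 * q + i) + 1 by omega,
    show s + 4 * q + (2 * (s / 2 + j) + 1 - s) = 2 * (s / 2 + 2 * q + j) + 1 by omega] at hij

end IsSquareAt

section interleave

variable {A B C : List ℤ} {m k : ℕ}

lemma getD_interleave (hk : k < 4 * m - 1) :
    (interleave A B C m).getD k 0 =
      if (k + 1) % 4 = 1 then A.getD ((k + 4) / 4 - 1) 0
      else if (k + 1) % 4 = 3 then C.getD ((k + 2) / 4 - 1) 0
      else B.getD ((k + 1) / 2 - 1) 0 := by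
  simp [interleave, List.getD_eq_getElem?_getD, hk]

lemma getD_interleave_of_mod_four_eq_zero (h : k % 4 = 0) (hk : k < 4 * m - 1) :
    (interleave A B C m).getD k 0 = A.getD (k / 4) 0 := by
  rw [getD_interleave hk, if_pos (by omega)]
  congr 1; omega

lemma getD_interleave_of_mod_four_eq_two (h : k % 4 = 2) (hk : k < 4 * m - 1) :
    (interleave A B C m).getD k 0 = C.getD (k / 4) 0 := by
  rw [getD_interleave hk, if_neg (by omega), if_pos (by omega)]
  congr 1; omega

lemma getD_interleave_of_mod_two_eq_one (h : k % 2 = 1) (hk : k < 4 * m - 1) :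
    (interleave A B C m).getD k 0 = B.getD (k / 2) 0 := by
  rw [getD_interleave hk, if_neg (by omega), if_neg (by omega)]
  congr 1; omega

lemma getD_interleave_two_mul_add_one (hB : B.length = 2 * m - 1) (t : ℕ) :
    (interleave A B C m).getD (2 * t + 1) 0 = B.getD t 0 := by
  by_cases ht : 2 * t + 1 < 4 * m - 1
  · rw [getD_interleave_of_mod_two_eq_one (by omega) ht]
    congr 1; omega
  · rw [List.getD_eq_default _ _ (by simp [interleave]; omega),
      List.getD_eq_default _ _ (by omega)]

lemma getD_interleave_lt_succ_iff (hA : A.length = m) (hB : B.length = 2 * m - 1)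
    (hC : C.length = m) (hAB : ∀ a ∈ A, ∀ b ∈ B, a < b) (hBC : ∀ b ∈ B, ∀ c ∈ C, b < c)
    (hk : k + 1 < 4 * m - 1) :
    (interleave A B C m).getD k 0 < (interleave A B C m).getD (k + 1) 0 ↔ k % 4 < 2 := by
  have hk' : k < 4 * m - 1 := by omega
  rcases (by omega : k % 4 = 0 ∨ k % 4 = 1 ∨ k % 4 = 2 ∨ k % 4 = 3) with h | h | h | h
  · rw [getD_interleave_of_mod_four_eq_zero h hk',
      getD_interleave_of_mod_two_eq_one (by omega) hk]
    exact iff_of_true (hAB _ (getD_mem (by omega)) _ (getD_mem (by omega))) (by omega)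
  · rw [getD_interleave_of_mod_two_eq_one (by omega) hk',
      getD_interleave_of_mod_four_eq_two (by omega) hk]
    exact iff_of_true (hBC _ (getD_mem (by omega)) _ (getD_mem (by omega))) (by omega)
  · rw [getD_interleave_of_mod_four_eq_two h hk',
      getD_interleave_of_mod_two_eq_one (by omega) hk]
    exact iff_of_false
      (lt_asymm (hBC _ (getD_mem (by omega)) _ (getD_mem (by omega)))) (by omega)
  · rw [getD_interleave_of_mod_two_eq_one (by omega) hk',
      getD_interleave_of_mod_four_eq_zero (by omega) hk]
    exact iff_of_false
      (lt_asymm (hAB _ (getD_mem (by omega)) _ (getD_mem (by omega)))) (by omega)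

end interleave

theorem stmt3_general (m : ℕ) (A B C : List ℤ)
    (hA : A.length = m) (hB : B.length = 2*m - 1) (hC : C.length = m)
    (hAB : ∀ a ∈ A, ∀ b ∈ B, a < b) (hBC : ∀ b ∈ B, ∀ c ∈ C, b < c)
    (hBsf : SquareFreeL B) :
    SquareFreeL (interleave A B C m) := by
  intro hP
  obtain ⟨s, L, hL, hlen, hsq⟩ := (containsSquare_iff_exists_isSquareAt _).1 hP
  simp only [interleave, List.length_map, List.length_range] at hlen
  obtain ⟨q, rfl⟩ := hsq.four_dvd
    (fun k hk => getD_interleave_lt_succ_iff hA hB hC hAB hBC (by omega)) hL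
  refine hBsf ((containsSquare_iff_exists_isSquareAt B).2
    ⟨s / 2, 2 * q, by omega, by omega, ?_⟩)
  simpa only [getD_interleave_two_mul_add_one hB] using hsq.comp_odd

theorem stmt3 (m : ℕ) (hm : 1 ≤ m) (A B C : List ℤ)
    (hA : A.length = m) (hB : B.length = 2*m - 1) (hC : C.length = m)
    (hAn : A.Nodup) (hBn : B.Nodup) (hCn : C.Nodup)
    (hAB : ∀ a ∈ A, ∀ b ∈ B, a < b) (hBC : ∀ b ∈ B, ∀ c ∈ C, b < c)
    (hBsf : SquareFreeL B) :
    SquareFreeL (interleave A B C m) :=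
  stmt3_general m A B C hA hB hC hAB hBC hBsf
end

section
/- Let P be a permutation constructed by the high-medium-low construction (satisfying conditions (S1)-(S3)). Then no contiguous factor of P of length 4 is order-isomorphic to any of the permutations 2341, 3214, 4123, or 1432. -/
/-! In every window of four consecutive symbols of `P` there is exactly one lower-level and one
upper-level position, and they are two apart. By (S2) the lower symbol is the minimum of the
window and the upper symbol its maximum (the two compare through a medium symbol). In each of
2341, 3214, 4123 and 1432 the minimum and the maximum sit next to each other, so none of them is
order-isomorphic to such a window. -/

def MinMaxTwoApart (f : List ℤ) : Prop :=
  ∃ m < 4, (∀ k < 4, k ≠ m → f.getD m 0 < f.getD k 0) ∧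
    (∀ k < 4, k ≠ (m + 2) % 4 → f.getD k 0 < f.getD ((m + 2) % 4) 0)

theorem MinMaxTwoApart.of_ordIso {f q : List ℤ} (hf : MinMaxTwoApart f) (hfq : OrdIso f q)
    (h4 : f.length = 4) : MinMaxTwoApart q := by
  obtain ⟨m, hm, hmin, hmax⟩ := hf
  have transfer : ∀ u < 4, ∀ v < 4, f.getD u 0 < f.getD v 0 → q.getD u 0 < q.getD v 0 :=
    fun u hu v hv => (hfq.2 u v (by omega) (by omega)).mp
  exact ⟨m, hm, fun k hk hkm => transfer m hm k hk (hmin k hk hkm),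
    fun k hk hkm => transfer k hk _ (by omega) (hmax k hk hkm)⟩

theorem patterns_not_minMaxTwoApart :
    ¬ MinMaxTwoApart [2, 3, 4, 1] ∧ ¬ MinMaxTwoApart [3, 2, 1, 4] ∧
      ¬ MinMaxTwoApart [4, 1, 2, 3] ∧ ¬ MinMaxTwoApart [1, 4, 3, 2] := by
  unfold MinMaxTwoApart
  decide

theorem List.getD_length_add_of_append_eq {α : Type*} {s f t P : List α} (hP : s ++ f ++ t = P)
    {k : ℕ} (hk : k < f.length) (d : α) : P.getD (s.length + k) d = f.getD k d := by
  rw [← hP, List.append_assoc, List.getD_append_right _ _ _ _ (by omega),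
    Nat.add_sub_cancel_left, List.getD_append _ _ _ _ hk]

namespace HML

variable {P : List ℤ} {i j k : ℕ}

-- Positions are 0-based here, while `HML` counts them from 1.

theorem lower_lt_medium (h : HML P i) (hj : j < P.length) (hk : k < P.length)
    (hjl : (j + 1) % 4 = i % 4) (hkm : (k + 1) % 2 ≠ i % 2) : P.getD j 0 < P.getD k 0 := by
  simpa using (h.2.2.1 (j + 1) (k + 1) (by omega) hj (by omega) hk).1 hjl hkm

theorem medium_lt_upper (h : HML P i) (hj : j < P.length) (hk : k < P.length)
    (hjm : (j + 1) % 2 ≠ i % 2) (hku : (k + 1) % 4 = (i + 2) % 4) :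
    P.getD j 0 < P.getD k 0 := by
  simpa using (h.2.2.1 (j + 1) (k + 1) (by omega) hj (by omega) hk).2 hjm hku

theorem minMaxTwoApart_of_infix (h : HML P i) {f : List ℤ} (hf : f <:+: P)
    (h4 : f.length = 4) : MinMaxTwoApart f := by
  obtain ⟨s, t, hP⟩ := hf
  have hlen : s.length + 4 ≤ P.length := by
    rw [← hP]; simp only [List.length_append, h4]; omega
  have hget : ∀ k < 4, P.getD (s.length + k) 0 = f.getD k 0 :=
    fun k hk => List.getD_length_add_of_append_eq hP (by omega) 0
  have hi := h.1
  set a := s.length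
  set m := (i + 3 * (a + 1)) % 4
  have hlower : (a + m + 1) % 4 = i % 4 := by omega
  have hmedium : (a + (m + 1) % 4 + 1) % 2 ≠ i % 2 := by omega
  have lower_lt_upper : P.getD (a + m) 0 < P.getD (a + (m + 2) % 4) 0 :=
    (h.lower_lt_medium (by omega) (by omega) hlower hmedium).trans
      (h.medium_lt_upper (by omega) (by omega) hmedium (by omega))
  refine ⟨m, by omega, fun k hk hkm => ?_, fun k hk hkM => ?_⟩
  · rw [← hget m (by omega), ← hget k hk]
    by_cases hup : k = (m + 2) % 4
    · rwa [hup]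
    · exact h.lower_lt_medium (by omega) (by omega) hlower (by omega)
  · rw [← hget k hk, ← hget _ (by omega)]
    by_cases hlo : k = m
    · rwa [hlo]
    · exact h.medium_lt_upper (by omega) (by omega) (by omega) (by omega)

end HML

theorem stmt5_general (P : List ℤ) (i : ℕ) (h : HML P i) :
    ∀ f : List ℤ, f <:+: P → f.length = 4 →
      ¬ OrdIso f [2, 3, 4, 1] ∧ ¬ OrdIso f [3, 2, 1, 4] ∧
      ¬ OrdIso f [4, 1, 2, 3] ∧ ¬ OrdIso f [1, 4, 3, 2] := by
  intro f hf h4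
  have hwindow := h.minMaxTwoApart_of_infix hf h4
  obtain ⟨h2341, h3214, h4123, h1432⟩ := patterns_not_minMaxTwoApart
  exact ⟨fun hq => h2341 (hwindow.of_ordIso hq h4), fun hq => h3214 (hwindow.of_ordIso hq h4),
    fun hq => h4123 (hwindow.of_ordIso hq h4), fun hq => h1432 (hwindow.of_ordIso hq h4)⟩

theorem stmt5 (P : List ℤ) (hnd : P.Nodup) (i : ℕ) (h : HML P i) :
    ∀ f : List ℤ, f <:+: P → f.length = 4 →
      ¬ OrdIso f [2, 3, 4, 1] ∧ ¬ OrdIso f [3, 2, 1, 4] ∧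
      ¬ OrdIso f [4, 1, 2, 3] ∧ ¬ OrdIso f [1, 4, 3, 2] :=
  stmt5_general P i h
end

section
/- The permutation Q = 2,4,3,1,5,11,10,6,9,12,8,7,13,17,15,0,14,16 of length 18 is square-free. Consequently, the permutation P = 2,4,3,1,5,11,10,6,9,12,8,7,13,17,15,14,16 of length 17 is not S-crucial, since Q is an extension of P in position 15 containing no square. -/
def Q14 : List ℤ := [2, 4, 3, 1, 5, 11, 10, 6, 9, 12, 8, 7, 13, 17, 15, 0, 14, 16]

def P14 : List ℤ := [2, 4, 3, 1, 5, 11, 10, 6, 9, 12, 8, 7, 13, 17, 15, 14, 16]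

instance (p q : List ℤ) : Decidable (OrdIso p q) :=
  decidable_of_iff (p.length = q.length ∧
      ∀ i < p.length, ∀ j < p.length,
        (p.getD i 0 < p.getD j 0 ↔ q.getD i 0 < q.getD j 0))
    ⟨fun ⟨hlen, h⟩ => ⟨hlen, fun i j hi hj => h i hi j hj⟩,
     fun ⟨hlen, h⟩ => ⟨hlen, fun i hi j hj => h i j hi hj⟩⟩

theorem containsSquare_iff_exists_drop_take (p : List ℤ) :
    ContainsSquare p ↔ ∃ s m : ℕ, 2 ≤ m ∧ s + (m + m) ≤ p.length ∧
      OrdIso ((p.drop s).take m) ((p.drop (s + m)).take m) := by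
  constructor
  · rintro ⟨f, ⟨u, t, rfl⟩, a, b, rfl, ha, hab⟩
    refine ⟨u.length, a.length, ha, by simp [hab.1], ?_⟩
    rw [List.append_assoc, List.append_assoc, List.drop_left, List.take_left, ← List.length_append,
      ← List.append_assoc u, List.drop_left, hab.1, List.take_left]
    exact hab
  · rintro ⟨s, m, hm, hlen, hiso⟩
    refine ⟨(p.drop s).take m ++ (p.drop (s + m)).take m, ?_, _, _, rfl, by simp; omega, hiso⟩
    rw [← List.drop_drop, ← List.take_add]
    exact (List.take_prefix _ _).isInfix.trans (List.drop_suffix s p).isInfix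

instance : DecidablePred ContainsSquare := fun p =>
  decidable_of_iff (∃ s < p.length + 1, ∃ m < p.length + 1, 2 ≤ m ∧ s + (m + m) ≤ p.length ∧
      OrdIso ((p.drop s).take m) ((p.drop (s + m)).take m)) <| by
    rw [containsSquare_iff_exists_drop_take]
    constructor
    · rintro ⟨s, -, m, -, h⟩
      exact ⟨s, m, h⟩
    · rintro ⟨s, m, hm, hlen, hiso⟩
      exact ⟨s, by omega, m, by omega, hm, hlen, hiso⟩

theorem stmt14 :
    SquareFreeL Q14 ∧ ExtL Q14 P14 15 ∧
    ¬ (∀ i ≤ 17, ∀ Q : List ℤ, ExtL Q P14 i → ContainsSquare Q) := by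
  have hsf : SquareFreeL Q14 := by unfold SquareFreeL; decide
  have hext : ExtL Q14 P14 15 := by unfold ExtL; decide
  exact ⟨hsf, hext, fun h => hsf (h 15 (by norm_num) Q14 hext)⟩
end

section
/- There is no S-crucial square-free permutation of length 17 of the form P = 2,4,3,1,5,11,10,6,9,12,8,7,13,17,15,14,16; specifically, the extension of P obtained by inserting a new smallest symbol in position 15 is square-free. -/
def P18 : List ℤ := [2, 4, 3, 1, 5, 11, 10, 6, 9, 12, 8, 7, 13, 17, 15, 14, 16]

/-- P18 with a new smallest symbol 0 inserted in position 15. -/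
def Q18 : List ℤ := [2, 4, 3, 1, 5, 11, 10, 6, 9, 12, 8, 7, 13, 17, 15, 0, 14, 16]

/-!
A factor of `Q18` is a square exactly when, for some start `s` and half-length `k ≥ 2`, the
blocks `Q18[s, s+k)` and `Q18[s+k, s+2k)` are order-isomorphic. This turns square-freeness into a
bounded search that the kernel decides. A square-free extension in position `15 ≤ 17` then
witnesses that `P18` is not S-crucial.
-/

instance OrdIso.instDecidable (p q : List ℤ) : Decidable (OrdIso p q) :=
  decidable_of_iff (p.length = q.length ∧ ∀ i < p.length, ∀ j < p.length,
      (p.getD i 0 < p.getD j 0 ↔ q.getD i 0 < q.getD j 0))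
    ⟨fun ⟨hlen, h⟩ => ⟨hlen, fun i j hi hj => h i hi j hj⟩,
     fun ⟨hlen, h⟩ => ⟨hlen, fun i hi j hj => h i j hi hj⟩⟩

theorem containsSquare_iff_exists_index (p : List ℤ) :
    ContainsSquare p ↔ ∃ s < p.length, ∃ k < p.length, 2 ≤ k ∧ s + 2 * k ≤ p.length ∧
      OrdIso ((p.drop s).take k) ((p.drop (s + k)).take k) := by
  constructor
  · rintro ⟨f, ⟨u, t, hp⟩, a, b, rfl, ha, iso⟩
    have hlen : a.length = b.length := iso.1
    have hplen : p.length = u.length + (a.length + b.length) + t.length := by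
      simp only [← hp, List.length_append]
    have hdrop : p.drop u.length = a ++ (b ++ t) := by
      rw [← hp, List.append_assoc, List.drop_left, List.append_assoc]
    have hfst : (p.drop u.length).take a.length = a := by
      rw [hdrop, List.take_left]
    have hsnd : (p.drop (u.length + a.length)).take a.length = b := by
      rw [← List.drop_drop, hdrop, List.drop_left, hlen, List.take_left]
    exact ⟨u.length, by omega, a.length, by omega, ha, by omega, by rwa [hfst, hsnd]⟩
  · rintro ⟨s, -, k, -, hk, hsk, iso⟩
    refine ⟨(p.drop s).take k ++ (p.drop (s + k)).take k, ?_, _, _, rfl, ?_, iso⟩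
    · rw [← List.drop_drop, ← List.take_add]
      exact ((p.drop s).take_prefix (k + k)).isInfix.trans (p.drop_suffix s).isInfix
    · rw [List.length_take, List.length_drop]
      omega

theorem not_crucial_of_extL_of_squareFreeL {P Q : List ℤ} {i n : ℕ} (hi : i ≤ n)
    (hext : ExtL Q P i) (hQ : SquareFreeL Q) :
    ¬ (SquareFreeL P ∧ ∀ j ≤ n, ∀ Q : List ℤ, ExtL Q P j → ContainsSquare Q) :=
  fun ⟨_, hcrucial⟩ => hQ (hcrucial i hi Q hext)

theorem extL_Q18_P18 : ExtL Q18 P18 15 := by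
  unfold ExtL; decide

theorem squareFreeL_Q18 : SquareFreeL Q18 := by
  rw [SquareFreeL, containsSquare_iff_exists_index]; decide

theorem stmt18 :
    (∀ x ∈ P18, (0 : ℤ) < x) ∧ ExtL Q18 P18 15 ∧ SquareFreeL Q18 ∧
    ¬ (SquareFreeL P18 ∧
        ∀ i ≤ 17, ∀ Q : List ℤ, ExtL Q P18 i → ContainsSquare Q) :=
  ⟨by decide, extL_Q18_P18, squareFreeL_Q18,
    not_crucial_of_extL_of_squareFreeL (by norm_num) extL_Q18_P18 squareFreeL_Q18⟩
end
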